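/- Let O be a shift orbit of indecomposable objects of C and let A_O be the Z[t,t^{-1}]-module generated by the classes of objects of O in A(C)^t, where t acts as the shift. Then A_O ≅ Z[t,t^{-1}] if O is infinite, and A_O ≅ Z[t,t^{-1}]/(t^n − 1) if O has size n. Moreover A(C)^t is the direct sum of the A_O over all shift orbits O. -/

import Mathlib

open CategoryTheory Limits Pretriangulated Module
open scoped Classical

noncomputable section

universe v u

variable {k : Type} [Field k] [IsAlgClosed k]
variable {C : Type u} [Category.{v} C] [Preadditive C] [CategoryTheory.Linear k C]
  [HasZeroObject C] [HasBinaryBiproducts C] [HasFiniteBiproducts C]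
  [HasShift C ℤ] [∀ n : ℤ, (CategoryTheory.shiftFunctor C n).Additive]
  [Pretriangulated C]
  [∀ X Y : C, FiniteDimensional k (X ⟶ Y)]

/-- An object is indecomposable if it is nonzero and admits no nontrivial
direct sum decomposition. -/
def Indec (W : C) : Prop :=
  ¬ IsZero W ∧ ∀ A B : C, Nonempty (W ≅ A ⊞ B) → IsZero A ∨ IsZero B

/-- The Krull-Schmidt property: indecomposables have local endomorphism rings
and every object is a finite direct sum of indecomposables. -/
def KrullSchmidt : Prop :=
  (∀ W : C, Indec W → ∀ f : W ⟶ W, IsIso f ∨ IsIso (𝟙 W - f)) ∧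
  (∀ X : C, ∃ (n : ℕ) (f : Fin n → C), (∀ i, Indec (f i)) ∧ Nonempty (X ≅ ⨁ f))

/-- An Auslander-Reiten triangle: a distinguished triangle with indecomposable
end terms, nonzero connecting map, such that every non-split-epi to the third
object factors through the middle (equivalently every non-split-mono out of the
first object factors through the middle). -/
def IsARTriangle (T : Triangle C) : Prop :=
  (T ∈ distTriang C) ∧ Indec T.obj₁ ∧ Indec T.obj₃ ∧ T.mor₃ ≠ 0 ∧
  (∀ (W : C) (f : W ⟶ T.obj₃), (¬ ∃ s : T.obj₃ ⟶ W, s ≫ f = 𝟙 T.obj₃) →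
    ∃ g : W ⟶ T.obj₂, g ≫ T.mor₂ = f) ∧
  (∀ (W : C) (f : T.obj₁ ⟶ W), (¬ ∃ s : W ⟶ T.obj₁, f ≫ s = 𝟙 T.obj₁) →
    ∃ g : T.obj₂ ⟶ W, T.mor₁ ≫ g = f)

/-- The set of isomorphism classes of indecomposable objects of `C`. -/
abbrev IndecCls (C : Type u) [Category.{v} C] [Preadditive C] [HasZeroObject C]
    [HasBinaryBiproducts C] : Type u :=
  {x : _root_.Quotient (CategoryTheory.isIsomorphicSetoid C) // ∃ W : C, Indec W ∧ ⟦W⟧ = x}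

/-- The Grothendieck group `A(C)`: the free abelian group on the isomorphism
classes of indecomposable objects of `C`, with only direct-sum relations. -/
abbrev GreenGroup (C : Type u) [Category.{v} C] [Preadditive C] [HasZeroObject C]
    [HasBinaryBiproducts C] : Type u :=
  FreeAbelianGroup (IndecCls C)

/-- The class `[W] ∈ A(C)` of an indecomposable object (and `0` otherwise). -/
def cls (W : C) : GreenGroup C :=
  if h : Indec W then FreeAbelianGroup.of (⟨⟦W⟧, W, h, rfl⟩ : IndecCls C) else 0

/-- The bilinear form on `A(C)` extending `⟨[C],[D]⟩ = dim Hom(C,D)`. -/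
def homPairing : GreenGroup C →+ GreenGroup C →+ ℤ :=
  FreeAbelianGroup.lift fun s : IndecCls C =>
    FreeAbelianGroup.lift fun t : IndecCls C =>
      (finrank k (Quotient.out (Subtype.val s) ⟶ Quotient.out (Subtype.val t)) : ℤ)

open scoped TensorProduct

/-- The ring `ℤ[t,t⁻¹]` of Laurent polynomials. -/
abbrev L := LaurentPolynomial ℤ

/-- The submodule of relations `1 ⊗ [M[i]] − tⁱ ⊗ [M]`. -/
def shiftRel : Submodule L (L ⊗[ℤ] GreenGroup C) :=
  Submodule.span L {x | ∃ (M : C) (i : ℤ),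
    x = (1 : L) ⊗ₜ[ℤ] cls (M⟦i⟧) - LaurentPolynomial.T i ⊗ₜ[ℤ] cls M}

/-- The extended Grothendieck group `A(C)^t = (ℤ[t,t⁻¹] ⊗ A(C))/I`, a module
over `ℤ[t,t⁻¹]` on which `t` acts as the shift. -/
def GreenGroupT :=
  (L ⊗[ℤ] GreenGroup C) ⧸ shiftRel (C := C)

instance : AddCommGroup (GreenGroupT (C := C)) := by unfold GreenGroupT; infer_instance
instance : Module L (GreenGroupT (C := C)) := by unfold GreenGroupT; infer_instance

/-- The class of an object of `C` in `A(C)^t`. -/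
def clsT (W : C) : GreenGroupT (C := C) :=
  Submodule.Quotient.mk ((1 : L) ⊗ₜ[ℤ] cls W)

/-- The `ℤ[t,t⁻¹]`-submodule `A_O` of `A(C)^t` spanned by the classes of
objects in the shift orbit of `M`. -/
def orbitSpan (M : C) : Submodule L (GreenGroupT (C := C)) :=
  Submodule.span L {x | ∃ (N : C) (i : ℤ), Nonempty (N ≅ M⟦i⟧) ∧ x = clsT N}

/-! Let `J_a ⊆ ℤ[t,t⁻¹]` be the ideal generated by the `tᵈ - 1` with `(M a)⟦d⟧ ≅ M a`. The map
`⨁ₐ ℤ[t,t⁻¹]/J_a → A(C)^t` sending `p` in the summand `a` to `p • [M a]` is an isomorphism: its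
inverse sends the class of an indecomposable `N ≅ (M a)⟦i⟧` to `tⁱ` in the summand `a`, which is
well defined because `a` is unique and `i` is unique modulo the stabiliser of `M a`, and which
respects the relations `[N⟦i⟧] = tⁱ [N]`. The summand `a` maps onto `A_O`, so `A(C)^t` is the direct
sum of the `A_O` and `A_O ≅ ℤ[t,t⁻¹]/J_a`. The stabiliser is `0` for an infinite orbit and `nℤ`
for an orbit of size `n`, and then `J_a` is `0`, resp. `(tⁿ - 1)`. -/

set_option linter.unusedSectionVars false

namespace LaurentPolynomial

variable {R : Type*} [CommRing R]

def periods (I : Ideal R[T;T⁻¹]) : AddSubgroup ℤ where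
  carrier := {d | T d - 1 ∈ I}
  zero_mem' := by simp
  add_mem' {a b} ha hb := by
    have h : (T (a + b) - 1 : R[T;T⁻¹]) = T a * (T b - 1) + (T a - 1) := by rw [T_add]; ring
    simpa only [Set.mem_ofPred_eq, h] using I.add_mem (I.mul_mem_left _ hb) ha
  neg_mem' {a} ha := by
    have h : (T (-a) - 1 : R[T;T⁻¹]) = -T (-a) * (T a - 1) := by
      rw [neg_mul, mul_sub, ← T_add, neg_add_cancel, T_zero, mul_one, neg_sub]
    simpa only [Set.mem_ofPred_eq, h] using I.mul_mem_left _ ha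

def periodIdeal (H : AddSubgroup ℤ) : Ideal R[T;T⁻¹] :=
  Ideal.span ((fun d => T d - 1) '' H)

theorem periodIdeal_le_iff {H : AddSubgroup ℤ} {I : Ideal R[T;T⁻¹]} :
    periodIdeal H ≤ I ↔ H ≤ periods I := by
  rw [periodIdeal, Ideal.span_le, Set.image_subset_iff]
  rfl

theorem T_sub_one_mem_periodIdeal {H : AddSubgroup ℤ} {d : ℤ} (hd : d ∈ H) :
    (T d - 1 : R[T;T⁻¹]) ∈ periodIdeal H :=
  Ideal.subset_span ⟨d, hd, rfl⟩

theorem T_sub_T_mem_periodIdeal {H : AddSubgroup ℤ} {i j : ℤ} (h : i - j ∈ H) :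
    (T i - T j : R[T;T⁻¹]) ∈ periodIdeal H := by
  have hfac : (T i - T j : R[T;T⁻¹]) = T j * (T (i - j) - 1) := by
    rw [mul_sub, ← T_add, add_sub_cancel, mul_one]
  rw [hfac]
  exact Ideal.mul_mem_left _ _ (T_sub_one_mem_periodIdeal h)

theorem periodIdeal_bot : periodIdeal (⊥ : AddSubgroup ℤ) = (⊥ : Ideal R[T;T⁻¹]) :=
  eq_bot_iff.2 (periodIdeal_le_iff.2 bot_le)

theorem periodIdeal_zmultiples (n : ℤ) :
    periodIdeal (AddSubgroup.zmultiples n) = Ideal.span {(T n - 1 : R[T;T⁻¹])} :=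
  le_antisymm (periodIdeal_le_iff.2 (AddSubgroup.zmultiples_le.2 (Ideal.subset_span rfl)))
    (Ideal.span_le.2 (Set.singleton_subset_iff.2
      (T_sub_one_mem_periodIdeal (AddSubgroup.mem_zmultiples n))))

end LaurentPolynomial

theorem DirectSum.isInternal_range_comp_lof {R ι M : Type*} [Semiring R] [DecidableEq ι]
    {N : ι → Type*} [∀ i, AddCommMonoid (N i)] [∀ i, Module R (N i)] [AddCommMonoid M]
    [Module R M] {σ : DirectSum ι N →ₗ[R] M} (hσ : Function.Bijective σ) :
    DirectSum.IsInternal fun i => LinearMap.range (σ ∘ₗ DirectSum.lof R ι N i) := by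
  let g := DirectSum.lmap fun i => (σ ∘ₗ DirectSum.lof R ι N i).rangeRestrict
  have hg : Function.Bijective g :=
    ⟨(DirectSum.lmap_injective _).2 fun i _ _ h =>
        hσ.1.comp (DirectSum.of_injective i) (congrArg Subtype.val h),
      (DirectSum.lmap_surjective _).2 fun i => LinearMap.surjective_rangeRestrict _⟩
  have hcomp : DirectSum.coeLinearMap _ ∘ₗ g = σ :=
    DirectSum.linearMap_ext _ fun i => by ext x; simp [g]
  refine (Function.Bijective.of_comp_iff _ hg).1 ?_
  rw [← hcomp] at hσ
  exact hσ

open LaurentPolynomial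

theorem Indec.of_iso {W W' : C} (h : Indec W) (e : W ≅ W') : Indec W' :=
  ⟨fun hz => h.1 (hz.of_iso e), fun A B ⟨f⟩ => h.2 A B ⟨e ≪≫ f⟩⟩

theorem Indec.shift {W : C} (h : Indec W) (i : ℤ) : Indec (W⟦i⟧) := by
  have : PreservesBinaryBiproducts (shiftFunctor C (-i)) :=
    preservesBinaryBiproducts_of_preservesBiproducts _
  refine ⟨fun hz => h.1 (((shiftFunctor C (-i)).map_isZero hz).of_iso (shiftShiftNeg W i).symm),
    fun A B ⟨f⟩ => ?_⟩
  have e : W ≅ A⟦-i⟧ ⊞ B⟦-i⟧ := (shiftShiftNeg W i).symm ≪≫ (shiftFunctor C (-i)).mapIso f ≪≫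
    (shiftFunctor C (-i)).mapBiprod A B
  refine (h.2 _ _ ⟨e⟩).imp (fun hA => ?_) (fun hB => ?_)
  · exact ((shiftFunctor C i).map_isZero hA).of_iso (shiftNegShift A i).symm
  · exact ((shiftFunctor C i).map_isZero hB).of_iso (shiftNegShift B i).symm

theorem indec_shift_iff {W : C} (i : ℤ) : Indec (W⟦i⟧) ↔ Indec W :=
  ⟨fun h => (h.shift (-i)).of_iso (shiftShiftNeg W i), fun h => h.shift i⟩

theorem indec_out (s : IndecCls C) : Indec s.1.out := by
  obtain ⟨W, hW, hs⟩ := s.2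
  exact hW.of_iso (Classical.choice (Quotient.exact (hs.trans (Quotient.out_eq s.1).symm)))

theorem cls_eq_of_iso {W W' : C} (e : W ≅ W') : cls W = cls W' := by
  by_cases h : Indec W
  · rw [cls, cls, dif_pos h, dif_pos (h.of_iso e)]
    exact congrArg _ (Subtype.ext (Quotient.sound ⟨e⟩))
  · rw [cls, cls, dif_neg h, dif_neg fun h' => h (h'.of_iso e.symm)]

theorem cls_out (s : IndecCls C) : cls s.1.out = FreeAbelianGroup.of s := by
  rw [cls, dif_pos (indec_out s)]
  exact congrArg _ (Subtype.ext (Quotient.out_eq s.1))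

theorem clsT_eq_of_iso {W W' : C} (e : W ≅ W') : clsT W = clsT W' := by
  rw [clsT, clsT, cls_eq_of_iso e]

theorem clsT_shift (W : C) (i : ℤ) : clsT (W⟦i⟧) = (T i : L) • clsT W := by
  refine (Submodule.Quotient.eq _).2 ?_
  beta_reduce
  rw [TensorProduct.smul_tmul', smul_eq_mul, mul_one]
  exact Submodule.subset_span ⟨W, i, rfl⟩

theorem GreenGroupT.linearMap_ext {P : Type*} [AddCommGroup P] [Module L P]
    {f g : GreenGroupT (C := C) →ₗ[L] P} (h : ∀ W : C, Indec W → f (clsT W) = g (clsT W)) :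
    f = g := by
  refine Submodule.linearMap_qext _ ((LinearMap.liftBaseChangeEquiv L).symm.injective ?_)
  refine LinearMap.toAddMonoidHom_injective (FreeAbelianGroup.lift_ext _ _ fun s => ?_)
  have := h _ (indec_out s)
  rwa [clsT, cls_out] at this

def shiftStabilizer (X : C) : AddSubgroup ℤ where
  carrier := {d | Nonempty (X⟦d⟧ ≅ X)}
  zero_mem' := ⟨(shiftFunctorZero C ℤ).app X⟩
  add_mem' {x y} := fun ⟨e₁⟩ ⟨e₂⟩ =>
    ⟨(shiftFunctorAdd C x y).app X ≪≫ (shiftFunctor C y).mapIso e₁ ≪≫ e₂⟩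
  neg_mem' {x} := fun ⟨e⟩ => ⟨(shiftFunctor C (-x)).mapIso e.symm ≪≫ shiftShiftNeg X x⟩

theorem shiftStabilizer_eq_bot {X : C} (h : ∀ i j : ℤ, Nonempty (X⟦i⟧ ≅ X⟦j⟧) → i = j) :
    shiftStabilizer X = ⊥ :=
  (AddSubgroup.eq_bot_iff_forall _).2 fun d ⟨e⟩ =>
    h d 0 ⟨e ≪≫ ((shiftFunctorZero C ℤ).app X).symm⟩

theorem shiftStabilizer_eq_zmultiples {X : C} {n : ℕ} (hn0 : 0 < n)
    (hn : Nonempty (X⟦(n : ℤ)⟧ ≅ X)) (hmin : ∀ j : ℤ, 0 < j → j < n → ¬ Nonempty (X⟦j⟧ ≅ X)) :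
    shiftStabilizer X = AddSubgroup.zmultiples (n : ℤ) := by
  rw [AddSubgroup.zmultiples_eq_closure]
  exact AddSubgroup.cyclic_of_min ⟨⟨hn, by omega⟩,
    fun j ⟨hj, hj0⟩ => not_lt.1 fun hjn => hmin j hj0 hjn hj⟩

theorem periodIdeal_shiftStabilizer_le_ker (X : C) :
    periodIdeal (shiftStabilizer X) ≤ LinearMap.ker (LinearMap.toSpanSingleton L _ (clsT X)) :=
  periodIdeal_le_iff.2 fun d ⟨e⟩ => by
    show (T d - 1 : L) ∈ LinearMap.ker (LinearMap.toSpanSingleton L _ (clsT X))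
    rw [LinearMap.mem_ker, LinearMap.toSpanSingleton_apply, sub_smul, one_smul, ← clsT_shift,
      clsT_eq_of_iso e, sub_self]

theorem orbitSpan_eq_span_singleton (X : C) : orbitSpan X = L ∙ clsT X := by
  refine le_antisymm (Submodule.span_le.2 ?_) ((Submodule.span_singleton_le_iff_mem _ _).2
    (Submodule.subset_span ⟨X, 0, ⟨((shiftFunctorZero C ℤ).app X).symm⟩, rfl⟩))
  rintro _ ⟨N, i, ⟨e⟩, rfl⟩
  rw [SetLike.mem_coe, clsT_eq_of_iso e, clsT_shift]
  exact Submodule.smul_mem _ _ (Submodule.mem_span_singleton_self _)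

section OrbitDecomposition

variable {ι : Type} (M : ι → C)

def CoversShiftOrbits : Prop :=
  ∀ N : C, Indec N → ∃ (a : ι) (j : ℤ), Nonempty (N ≅ (M a)⟦j⟧)

def ShiftOrbitsDistinct : Prop :=
  ∀ a b : ι, (∃ j : ℤ, Nonempty (M a ≅ (M b)⟦j⟧)) → a = b

abbrev OrbitSum : Type _ := DirectSum ι fun a => L ⧸ periodIdeal (shiftStabilizer (M a))

def orbitSumToGreenT : OrbitSum M →ₗ[L] GreenGroupT (C := C) :=
  DirectSum.toModule L ι _ fun a => (periodIdeal (shiftStabilizer (M a))).liftQ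
    (LinearMap.toSpanSingleton L _ (clsT (M a))) (periodIdeal_shiftStabilizer_le_ker (M a))

theorem orbitSumToGreenT_lof_mk (a : ι) (p : L) :
    orbitSumToGreenT M (DirectSum.lof L ι _ a (Submodule.Quotient.mk p)) = p • clsT (M a) := by
  rw [orbitSumToGreenT, DirectSum.toModule_lof, Submodule.liftQ_apply,
    LinearMap.toSpanSingleton_apply]

theorem range_orbitSumToGreenT_comp_lof (a : ι) :
    LinearMap.range (orbitSumToGreenT M ∘ₗ DirectSum.lof L ι _ a) = orbitSpan (M a) := by
  have hcomp : orbitSumToGreenT M ∘ₗ DirectSum.lof L ι _ a =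
      (periodIdeal (shiftStabilizer (M a))).liftQ (LinearMap.toSpanSingleton L _ (clsT (M a)))
        (periodIdeal_shiftStabilizer_le_ker (M a)) :=
    LinearMap.ext fun x => by
      rw [LinearMap.comp_apply, orbitSumToGreenT, DirectSum.toModule_lof]
  rw [hcomp, Submodule.range_liftQ, orbitSpan_eq_span_singleton, LinearMap.span_singleton_eq_range]

def orbitCoord (hcover : CoversShiftOrbits M) (s : IndecCls C) : OrbitSum M :=
  DirectSum.lof L ι _ (hcover _ (indec_out s)).choose
    (Submodule.Quotient.mk (T (hcover _ (indec_out s)).choose_spec.choose))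

theorem orbitCoord_eq (hcover : CoversShiftOrbits M) (hdisj : ShiftOrbitsDistinct M)
    {s : IndecCls C} {a : ι} {i : ℤ} (e : s.1.out ≅ (M a)⟦i⟧) :
    orbitCoord M hcover s = DirectSum.lof L ι _ a (Submodule.Quotient.mk (T i)) := by
  obtain ⟨e'⟩ := (hcover _ (indec_out s)).choose_spec.choose_spec
  have eM := (shiftShiftNeg _ _).symm ≪≫ (shiftFunctor C _).mapIso (e'.symm ≪≫ e) ≪≫
    ((shiftFunctorAdd C i _).app (M a)).symm
  obtain rfl := hdisj _ _ ⟨_, ⟨eM⟩⟩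
  refine congrArg _ ((Submodule.Quotient.eq _).2 (T_sub_T_mem_periodIdeal ?_))
  convert neg_mem (show _ ∈ shiftStabilizer (M _) from ⟨eM.symm⟩) using 1
  ring

theorem lift_orbitCoord_cls (hcover : CoversShiftOrbits M) (hdisj : ShiftOrbitsDistinct M)
    {N : C} (hN : Indec N) {a : ι} {i : ℤ} (e : N ≅ (M a)⟦i⟧) :
    FreeAbelianGroup.lift (orbitCoord M hcover) (cls N) =
      DirectSum.lof L ι _ a (Submodule.Quotient.mk (T i)) := by
  rw [cls, dif_pos hN, FreeAbelianGroup.lift_apply_of]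
  exact orbitCoord_eq M hcover hdisj
    (Classical.choice (Quotient.mk_out (s := isIsomorphicSetoid C) N) ≪≫ e)

theorem shiftRel_le_ker (hcover : CoversShiftOrbits M) (hdisj : ShiftOrbitsDistinct M) :
    shiftRel (C := C) ≤ LinearMap.ker
      ((FreeAbelianGroup.lift (orbitCoord M hcover)).toIntLinearMap.liftBaseChange L) := by
  rw [shiftRel, Submodule.span_le]
  rintro _ ⟨N, i, rfl⟩
  rw [SetLike.mem_coe, LinearMap.mem_ker, map_sub, LinearMap.liftBaseChange_tmul,
    LinearMap.liftBaseChange_tmul, one_smul, sub_eq_zero]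
  by_cases hN : Indec N
  · obtain ⟨a, j, ⟨e⟩⟩ := hcover N hN
    have e' : N⟦i⟧ ≅ (M a)⟦j + i⟧ :=
      (shiftFunctor C i).mapIso e ≪≫ ((shiftFunctorAdd C j i).app (M a)).symm
    simp only [AddMonoidHom.coe_toIntLinearMap]
    rw [lift_orbitCoord_cls M hcover hdisj (hN.shift i) e', lift_orbitCoord_cls M hcover hdisj hN e,
      ← map_smul, ← Submodule.Quotient.mk_smul, smul_eq_mul, ← T_add, add_comm]
  · simp [cls, hN, (indec_shift_iff i).not.2 hN]

def greenTToOrbitSum (hcover : CoversShiftOrbits M) (hdisj : ShiftOrbitsDistinct M) :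
    GreenGroupT (C := C) →ₗ[L] OrbitSum M :=
  (shiftRel (C := C)).liftQ _ (shiftRel_le_ker M hcover hdisj)

theorem greenTToOrbitSum_clsT (hcover : CoversShiftOrbits M) (hdisj : ShiftOrbitsDistinct M)
    {N : C} (hN : Indec N) {a : ι} {i : ℤ} (e : N ≅ (M a)⟦i⟧) :
    greenTToOrbitSum M hcover hdisj (clsT N) =
      DirectSum.lof L ι _ a (Submodule.Quotient.mk (T i)) := by
  refine (Submodule.liftQ_apply _ _ _).trans ?_
  rw [LinearMap.liftBaseChange_one_tmul]
  exact lift_orbitCoord_cls M hcover hdisj hN e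

theorem orbitSumToGreenT_bijective (hM : ∀ a, Indec (M a)) (hcover : CoversShiftOrbits M)
    (hdisj : ShiftOrbitsDistinct M) :
    Function.Bijective (orbitSumToGreenT M) := by
  have hleft : greenTToOrbitSum M hcover hdisj ∘ₗ orbitSumToGreenT M = LinearMap.id := by
    refine DirectSum.linearMap_ext _ fun a => ?_
    refine Submodule.linearMap_qext (M := L) (M₂ := OrbitSum M) (τ₁₂ := RingHom.id L)
      (periodIdeal (shiftStabilizer (M a))) (LinearMap.ext_ring ?_)
    simp only [LinearMap.comp_apply, Submodule.mkQ_apply, orbitSumToGreenT_lof_mk, one_smul,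
      greenTToOrbitSum_clsT M hcover hdisj (hM a) ((shiftFunctorZero C ℤ).app (M a)).symm, T_zero,
      LinearMap.id_apply]
  have hright : orbitSumToGreenT M ∘ₗ greenTToOrbitSum M hcover hdisj = LinearMap.id := by
    refine GreenGroupT.linearMap_ext fun N hN => ?_
    obtain ⟨a, i, ⟨e⟩⟩ := hcover N hN
    rw [LinearMap.comp_apply, greenTToOrbitSum_clsT M hcover hdisj hN e, orbitSumToGreenT_lof_mk,
      ← clsT_shift, clsT_eq_of_iso e, LinearMap.id_apply]
  exact ⟨Function.LeftInverse.injective (LinearMap.congr_fun hleft),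
    Function.RightInverse.surjective (LinearMap.congr_fun hright)⟩

theorem isInternal_orbitSpan (hbij : Function.Bijective (orbitSumToGreenT M)) :
    DirectSum.IsInternal fun a => orbitSpan (M a) := by
  simpa only [range_orbitSumToGreenT_comp_lof] using DirectSum.isInternal_range_comp_lof hbij

def orbitSpanEquiv (hbij : Function.Bijective (orbitSumToGreenT M)) (a : ι) :
    orbitSpan (M a) ≃ₗ[L] L ⧸ periodIdeal (shiftStabilizer (M a)) :=
  LinearEquiv.ofEq _ _ (range_orbitSumToGreenT_comp_lof M a).symm ≪≫ₗ
    (LinearEquiv.ofInjective (orbitSumToGreenT M ∘ₗ DirectSum.lof L ι _ a)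
      (hbij.1.comp (DirectSum.of_injective a))).symm

end OrbitDecomposition

theorem stmt8_general
    (ι : Type) (M : ι → C) (hM : ∀ a, Indec (M a))
    (hcover : ∀ N : C, Indec N → ∃ (a : ι) (j : ℤ), Nonempty (N ≅ (M a)⟦j⟧))
    (hdisj : ∀ a b : ι, (∃ j : ℤ, Nonempty (M a ≅ (M b)⟦j⟧)) → a = b) :
    (∀ a : ι, (∀ i j : ℤ, Nonempty ((M a)⟦i⟧ ≅ (M a)⟦j⟧) → i = j) →
      Nonempty (orbitSpan (M a) ≃ₗ[L] L)) ∧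
    (∀ (a : ι) (n : ℕ), 0 < n → Nonempty ((M a)⟦(n : ℤ)⟧ ≅ M a) →
      (∀ j : ℤ, 0 < j → j < n → ¬ Nonempty ((M a)⟦j⟧ ≅ M a)) →
      Nonempty (orbitSpan (M a) ≃ₗ[L]
        (L ⧸ Ideal.span {(LaurentPolynomial.T (n : ℤ) - 1 : L)}))) ∧
    iSupIndep (fun a : ι => orbitSpan (M a)) ∧
    (⨆ a : ι, orbitSpan (M a)) = ⊤ := by
  have hbij := orbitSumToGreenT_bijective M hM hcover hdisj
  have hint := isInternal_orbitSpan M hbij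
  refine ⟨fun a hfree => ?_, fun a n hn0 hn hmin => ?_, hint.submodule_iSupIndep,
    hint.submodule_iSup_eq_top⟩
  · have e := orbitSpanEquiv M hbij a
    rw [shiftStabilizer_eq_bot hfree, periodIdeal_bot] at e
    exact ⟨e ≪≫ₗ Submodule.quotEquivOfEqBot ⊥ rfl⟩
  · have e := orbitSpanEquiv M hbij a
    rw [shiftStabilizer_eq_zmultiples hn0 hn hmin, periodIdeal_zmultiples] at e
    exact ⟨e⟩

/-- for a family of representatives `M a` of the shift orbits of
indecomposables, each `A_O` is isomorphic to `ℤ[t,t⁻¹]` (infinite orbit) or to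
`ℤ[t,t⁻¹]/(tⁿ − 1)` (orbit of size `n`), and `A(C)^t` is the (internal) direct
sum of the `A_O`. -/
theorem stmt8 (hKS : KrullSchmidt (C := C))
    (ι : Type) (M : ι → C) (hM : ∀ a, Indec (M a))
    (hcover : ∀ N : C, Indec N → ∃ (a : ι) (j : ℤ), Nonempty (N ≅ (M a)⟦j⟧))
    (hdisj : ∀ a b : ι, (∃ j : ℤ, Nonempty (M a ≅ (M b)⟦j⟧)) → a = b) :
    (∀ a : ι, (∀ i j : ℤ, Nonempty ((M a)⟦i⟧ ≅ (M a)⟦j⟧) → i = j) →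
      Nonempty (orbitSpan (M a) ≃ₗ[L] L)) ∧
    (∀ (a : ι) (n : ℕ), 0 < n → Nonempty ((M a)⟦(n : ℤ)⟧ ≅ M a) →
      (∀ j : ℤ, 0 < j → j < n → ¬ Nonempty ((M a)⟦j⟧ ≅ M a)) →
      Nonempty (orbitSpan (M a) ≃ₗ[L]
        (L ⧸ Ideal.span {(LaurentPolynomial.T (n : ℤ) - 1 : L)}))) ∧
    iSupIndep (fun a : ι => orbitSpan (M a)) ∧
    (⨆ a : ι, orbitSpan (M a)) = ⊤ :=
  stmt8_general ι M hM hcover hdisj
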